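/- Null space characterization of the transposed Abaffian: if in addition a₁, …, a_i are linearly independent, then for each 1 ≤ i ≤ m the null space of H_{i+1}ᵀ, i.e. {x ∈ ℝⁿ : H_{i+1}ᵀ x = 0}, equals the linear span of the Abaffy parameter vectors w₁, …, w_i. -/

import Mathlib

/-!
The transposed update acts as `H_{k+1}ᵀ x = H_kᵀ (x - t x • w_k)` with
`t x = (H_k a_k ⬝ x) / (w_k ⬝ H_k a_k)`. The functional `t` takes the value `1` at `w_k` and
vanishes on `ker H_kᵀ` (because `H_k a_k ⬝ y = a_k ⬝ H_kᵀ y`), so each step enlarges the kernel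
of the transpose by exactly `span {w_k}`. Starting from the trivial kernel of the invertible `H₁`,
induction gives `ker H_{i+1}ᵀ = span {w₁, …, w_i}`.
-/

open Matrix

lemma Fin.range_val_succ {α : Type*} (f : ℕ → α) (i : ℕ) :
    Set.range (fun j : Fin (i + 1) => f j) = insert (f i) (Set.range fun j : Fin i => f j) := by
  ext x
  simp only [Set.mem_range, Set.mem_insert_iff, Fin.exists_fin_succ', Fin.val_castSucc,
    Fin.val_last]
  tauto

namespace Matrix

variable {K ι : Type*} [Field K] [Fintype ι]

noncomputable def abaffianUpdate (H : Matrix ι ι K) (a w : ι → K) : Matrix ι ι K :=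
  H - (w ⬝ᵥ H *ᵥ a)⁻¹ • vecMulVec (H *ᵥ a) (w ᵥ* H)

lemma abaffianUpdate_transpose_mulVec (H : Matrix ι ι K) (a w x : ι → K) :
    (abaffianUpdate H a w)ᵀ *ᵥ x =
      Hᵀ *ᵥ (x - ((w ⬝ᵥ H *ᵥ a)⁻¹ * (H *ᵥ a ⬝ᵥ x)) • w) := by
  rw [abaffianUpdate, transpose_sub, transpose_smul, transpose_vecMulVec, sub_mulVec,
    smul_mulVec, vecMulVec_mulVec, op_smul_eq_smul, mulVec_sub, mulVec_smul,
    ← mulVec_transpose, smul_smul]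

lemma ker_abaffianUpdate_transpose (H : Matrix ι ι K) (a w : ι → K) (hw : w ⬝ᵥ H *ᵥ a ≠ 0) :
    LinearMap.ker (abaffianUpdate H a w)ᵀ.mulVecLin =
      LinearMap.ker Hᵀ.mulVecLin ⊔ Submodule.span K {w} := by
  ext x
  simp only [LinearMap.mem_ker, mulVecLin_apply, Submodule.mem_sup,
    Submodule.mem_span_singleton]
  constructor
  · intro hx
    rw [abaffianUpdate_transpose_mulVec] at hx
    exact ⟨_, hx, _, ⟨_, rfl⟩, sub_add_cancel _ _⟩
  · rintro ⟨y, hy, _, ⟨t, rfl⟩, rfl⟩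
    have hy_perp : H *ᵥ a ⬝ᵥ y = 0 := by
      rw [dotProduct_comm, dotProduct_mulVec, ← mulVec_transpose, hy, zero_dotProduct]
    have hcoeff : (w ⬝ᵥ H *ᵥ a)⁻¹ * (H *ᵥ a ⬝ᵥ (y + t • w)) = t := by
      rw [dotProduct_add, hy_perp, zero_add, dotProduct_smul, dotProduct_comm (H *ᵥ a) w,
        smul_eq_mul, mul_comm t, inv_mul_cancel_left₀ hw]
    rw [abaffianUpdate_transpose_mulVec, hcoeff, add_sub_cancel_right, hy]

lemma ker_transpose_abaffian_eq_span [DecidableEq ι] (m : ℕ) (a w : ℕ → ι → K)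
    (H : ℕ → Matrix ι ι K) (hH1 : IsUnit (H 1))
    (hw : ∀ i, 1 ≤ i → i ≤ m → w i ⬝ᵥ H i *ᵥ a i ≠ 0)
    (hrec : ∀ i, 1 ≤ i → i ≤ m → H (i + 1) = abaffianUpdate (H i) (a i) (w i)) :
    ∀ i ≤ m, LinearMap.ker (H (i + 1))ᵀ.mulVecLin =
      Submodule.span K (Set.range fun j : Fin i => w (j + 1)) := by
  intro i
  induction i with
  | zero =>
    intro _
    rw [Set.range_eq_empty, Submodule.span_empty, LinearMap.ker_eq_bot]
    exact mulVec_injective_iff_isUnit.mpr ((isUnit_transpose _).mpr hH1)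
  | succ i ih =>
    intro hi
    rw [hrec (i + 1) (Nat.le_add_left 1 i) hi,
      ker_abaffianUpdate_transpose _ _ _ (hw (i + 1) (Nat.le_add_left 1 i) hi),
      ih (Nat.le_of_succ_le hi), Fin.range_val_succ (fun k => w (k + 1)), Submodule.span_insert,
      sup_comm]

end Matrix

theorem abs_null_space_abaffian_transpose_general
    (m n : ℕ)
    (a w : ℕ → (Fin n → ℝ))
    (H : ℕ → Matrix (Fin n) (Fin n) ℝ)
    (hH1 : IsUnit (H 1))
    (hw : ∀ i, 1 ≤ i → i ≤ m → w i ⬝ᵥ (H i).mulVec (a i) ≠ 0)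
    (hrec : ∀ i, 1 ≤ i → i ≤ m →
      H (i + 1) = H i - (w i ⬝ᵥ (H i).mulVec (a i))⁻¹ •
        Matrix.vecMulVec ((H i).mulVec (a i)) (Matrix.vecMul (w i) (H i))) :
    ∀ i, 1 ≤ i → i ≤ m →
      LinearIndependent ℝ (fun j : Fin i => a (j.1 + 1)) →
      {x : Fin n → ℝ | (H (i + 1))ᵀ.mulVec x = 0} =
        ↑(Submodule.span ℝ (Set.range fun j : Fin i => w (j.1 + 1))) := by
  intro i _ hi _
  rw [← ker_transpose_abaffian_eq_span m a w H hH1 hw hrec i hi]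
  rfl

theorem abs_null_space_abaffian_transpose
    (m n : ℕ) (hm : 0 < m) (hmn : m ≤ n)
    (a z w p : ℕ → (Fin n → ℝ))
    (H : ℕ → Matrix (Fin n) (Fin n) ℝ)
    (hH1 : IsUnit (H 1))
    (hz : ∀ i, 1 ≤ i → i ≤ m → z i ⬝ᵥ (H i).mulVec (a i) ≠ 0)
    (hw : ∀ i, 1 ≤ i → i ≤ m → w i ⬝ᵥ (H i).mulVec (a i) ≠ 0)
    (hrec : ∀ i, 1 ≤ i → i ≤ m →
      H (i + 1) = H i - (w i ⬝ᵥ (H i).mulVec (a i))⁻¹ •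
        Matrix.vecMulVec ((H i).mulVec (a i)) (Matrix.vecMul (w i) (H i)))
    (hp : ∀ i, 1 ≤ i → i ≤ m → p i = Matrix.mulVec (H i)ᵀ (z i)) :
    ∀ i, 1 ≤ i → i ≤ m →
      LinearIndependent ℝ (fun j : Fin i => a (j.1 + 1)) →
      {x : Fin n → ℝ | (H (i + 1))ᵀ.mulVec x = 0} =
        ↑(Submodule.span ℝ (Set.range fun j : Fin i => w (j.1 + 1))) :=
  abs_null_space_abaffian_transpose_general m n a w H hH1 hw hrec
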